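/- Let 0 < t ≤ n/2, d an integer with 0 ≤ d ≤ n, and H = {s_1 < ... < s_t} ⊆ [n] with t the smallest index j such that s_j < 2j. Set H' = H ∪ {2t,...,n} and f_{H,d} = Σ_{k=0}^t (-1)^{t-k} C(d-k, t-k) σ_{H',k} ∈ ℤ[x_1,...,x_n]. Then: (a) deg f_{H,d} = t with leading monomial x_H = Π_{j∈H} x_j (coefficient 1, under any term order with x_n ≺ ... ≺ x_1); (b) f_{H,d}(v_D) = 0 for every D ⊆ [n] with |D| = d. -/

import Mathlib

open MvPolynomial

/-- `u` is the leading monomial of `f` with respect to the term order `m`. -/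
def IsLeadingMonomial {σ F : Type*} [CommSemiring F] (m : MonomialOrder σ)
    (f : MvPolynomial σ F) (u : σ →₀ ℕ) : Prop :=
  u ∈ f.support ∧ ∀ v ∈ f.support, m.toSyn v ≤ m.toSyn u

/-- The polynomial `f_{H,d} = ∑_{k=0}^t (-1)^{t-k} C(d-k, t-k) σ_{H',k} ∈ ℤ[x_1,…,x_n]`,
where `H = {s 0 < … < s (t-1)}` (values in `[n]`), `H' = H ∪ {2t, …, n}`, `σ_{H',k}` is the
`k`-th elementary symmetric polynomial in the variables `x_j`, `j ∈ H'`, and the binomial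
coefficient `C(d-k, t-k)` is extended polynomially to integer arguments (`Ring.choose`).
Variables are indexed by `ℕ`, only `x_1, …, x_n` occurring. -/
noncomputable def fHd (n t d : ℕ) (s : Fin t → ℕ) : MvPolynomial ℕ ℤ :=
  ∑ k ∈ Finset.range (t + 1),
    C ((-1 : ℤ) ^ (t - k) * Ring.choose ((d : ℤ) - (k : ℤ)) (t - k)) *
      ∑ T ∈ (Finset.image s Finset.univ ∪ Finset.Icc (2 * t) n).powersetCard k,
        ∏ j ∈ T, X j

/-!
`f_{H,d}` is a combination of the `σ_{H',k}` with `k ≤ t`, so its monomials are squarefree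
monomials `x_T` with `T ⊆ H'`, `|T| ≤ t`, and `x_H` has coefficient `1`. Every element of
`H' \ H ⊆ [2t, n]` exceeds every element of `H ⊆ [1, 2t)`, so trading the variables of `T \ H`
for those of `H \ T` can only raise a monomial: `x_H` leads.

At `v_D` the polynomial `σ_{H',k}` takes the value `C(m, k)`, `m = |H' ∩ D|`. Upper negation
`(-1)^(t-k) C(d-k, t-k) = C(t-1-d, t-k)` and Chu–Vandermonde give `f_{H,d}(v_D) = C(m+t-1-d, t)`,
which vanishes since `0 ≤ m + t - 1 - d < t`: the complement of `H'` in `[n]` lies in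
`[1, 2t) \ H`, which has `t - 1` elements, so `d - m ≤ t - 1`.
-/

open Finset

theorem negOnePow_mul_choose_sub (y : ℤ) {k t : ℕ} (hk : k ≤ t) :
    (-1 : ℤ) ^ (t - k) * Ring.choose (y - k) (t - k) =
      Ring.choose ((t : ℤ) - 1 - y) (t - k) := by
  rw [show (t : ℤ) - 1 - y = -(y - t + 1) by ring, Ring.choose_neg, Units.smul_def,
    Int.coe_negOnePow_natCast, Nat.cast_sub hk]
  ring_nf

theorem sum_negOnePow_mul_choose_sub_mul_choose (y : ℤ) (m t : ℕ) :
    ∑ k ∈ range (t + 1), (-1 : ℤ) ^ (t - k) * Ring.choose (y - k) (t - k) * m.choose k =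
      Ring.choose ((m : ℤ) + (t - 1 - y)) t := by
  rw [Ring.add_choose_eq _ (Commute.all _ _), Nat.sum_antidiagonal_eq_sum_range_succ
    (fun i j => Ring.choose (m : ℤ) i * Ring.choose ((t : ℤ) - 1 - y) j)]
  refine sum_congr rfl fun k hk => ?_
  rw [negOnePow_mul_choose_sub y (Nat.lt_succ_iff.1 (mem_range.1 hk)), Ring.choose_natCast,
    mul_comm]

theorem Finset.sum_le_sum_of_card_le {ι M : Type*} [AddCommMonoid M] [PartialOrder M]
    [IsOrderedAddMonoid M] {f : ι → M} {A B : Finset ι} (hcard : #A ≤ #B)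
    (hB : ∀ b ∈ B, 0 ≤ f b) (hAB : ∀ a ∈ A, ∀ b ∈ B, f a ≤ f b) :
    ∑ a ∈ A, f a ≤ ∑ b ∈ B, f b := by
  classical
  induction A using Finset.induction_on generalizing B with
  | empty => exact sum_nonneg hB
  | insert a A ha ih =>
    rw [card_insert_of_notMem ha] at hcard
    obtain ⟨b, hb⟩ : B.Nonempty := card_pos.1 (by omega)
    rw [sum_insert ha, ← add_sum_erase B f hb]
    refine add_le_add (hAB a (mem_insert_self a A) b hb) (ih ?_ ?_ ?_)
    · rw [card_erase_of_mem hb]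
      omega
    · exact fun c hc => hB c (mem_of_mem_erase hc)
    · exact fun c hc d hd => hAB c (mem_insert_of_mem hc) d (mem_of_mem_erase hd)

namespace Finsupp

variable {σ : Type*}

theorem degree_sum_single_one (T : Finset σ) :
    (∑ j ∈ T, single j 1 : σ →₀ ℕ).degree = #T := by
  simp [map_sum]

theorem sum_single_one_apply [DecidableEq σ] (T : Finset σ) (a : σ) :
    (∑ j ∈ T, single j 1 : σ →₀ ℕ) a = if a ∈ T then 1 else 0 := by
  simp [finsetSum_apply, single_apply]

theorem sum_single_one_injective :
    Function.Injective fun T : Finset σ => (∑ j ∈ T, single j 1 : σ →₀ ℕ) := by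
  classical
  intro T U h
  ext a
  have := DFunLike.congr_fun h a
  simp only [sum_single_one_apply] at this
  split_ifs at this <;> simp_all

end Finsupp

theorem MonomialOrder.toSyn_sum_single_one_le {σ : Type*} [DecidableEq σ] (m : MonomialOrder σ)
    {T H : Finset σ} (hcard : #T ≤ #H) (h : ∀ a ∈ T \ H, ∀ b ∈ H \ T,
      m.toSyn (Finsupp.single a 1) ≤ m.toSyn (Finsupp.single b 1)) :
    m.toSyn (∑ j ∈ T, Finsupp.single j 1) ≤ m.toSyn (∑ j ∈ H, Finsupp.single j 1) := by
  rw [← sum_inter_add_sum_sdiff T H, ← sum_inter_add_sum_sdiff H T, inter_comm H T]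
  simp only [map_add, map_sum]
  refine add_le_add le_rfl (sum_le_sum_of_card_le ?_ (fun _ _ => bot_le) h)
  have := card_sdiff_add_card_inter T H
  have := card_sdiff_add_card_inter H T
  rw [inter_comm H T] at this
  omega

namespace MvPolynomial

/-- The paper's `σ_{S,k}`. -/
noncomputable def esymmOn {σ : Type*} (R : Type*) [CommSemiring R] (S : Finset σ) (k : ℕ) :
    MvPolynomial σ R :=
  ∑ T ∈ S.powersetCard k, ∏ j ∈ T, X j

variable {σ R : Type*} [CommSemiring R]

theorem esymmOn_eq_sum_monomial (S : Finset σ) (k : ℕ) :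
    esymmOn R S k = ∑ T ∈ S.powersetCard k, monomial (∑ j ∈ T, Finsupp.single j 1) 1 := by
  simp only [esymmOn, monomial_sum_one, X]

variable [DecidableEq σ]

theorem coeff_esymmOn (S U : Finset σ) (k : ℕ) :
    coeff (∑ j ∈ U, Finsupp.single j 1) (esymmOn R S k) =
      if U ∈ S.powersetCard k then 1 else 0 := by
  simp only [esymmOn_eq_sum_monomial, coeff_sum, coeff_monomial,
    Finsupp.sum_single_one_injective.eq_iff, sum_ite_eq']

theorem support_esymmOn_subset (S : Finset σ) (k : ℕ) :
    (esymmOn R S k).support ⊆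
      (S.powersetCard k).image fun T => ∑ j ∈ T, Finsupp.single j 1 := by
  rw [esymmOn_eq_sum_monomial]
  refine support_sum.trans (biUnion_subset.2 fun T hT => ?_)
  exact support_monomial_subset.trans (singleton_subset_iff.2 (mem_image_of_mem _ hT))

theorem eval_indicator_esymmOn (S D : Finset σ) (k : ℕ) :
    eval (fun i => if i ∈ D then (1 : R) else 0) (esymmOn R S k) = (#(S ∩ D)).choose k := by
  have hfilter : {T ∈ S.powersetCard k | ∀ j ∈ T, j ∈ D} = (S ∩ D).powersetCard k := by
    ext T
    simp only [mem_filter, mem_powersetCard, subset_inter_iff]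
    tauto
  simp only [esymmOn, map_sum, map_prod, eval_X, prod_boole, sum_boole, hfilter,
    card_powersetCard]

theorem coeff_sum_C_mul_esymmOn {S U : Finset σ} (c : ℕ → R) {N : ℕ} (hU : U ⊆ S)
    (hN : #U ≤ N) :
    coeff (∑ j ∈ U, Finsupp.single j 1) (∑ k ∈ range (N + 1), C (c k) * esymmOn R S k) =
      c #U := by
  simp only [coeff_sum, coeff_C_mul, coeff_esymmOn, mem_powersetCard, hU, true_and, mul_ite,
    mul_one, mul_zero, eq_comm (a := #U), sum_ite_eq', mem_range]
  simp [Nat.lt_succ_of_le hN]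

theorem exists_eq_of_mem_support_sum_C_mul_esymmOn {S : Finset σ} {c : ℕ → R} {N : ℕ}
    {v : σ →₀ ℕ} (hv : v ∈ (∑ k ∈ range (N + 1), C (c k) * esymmOn R S k).support) :
    ∃ T ⊆ S, #T ≤ N ∧ v = ∑ j ∈ T, Finsupp.single j 1 := by
  obtain ⟨k, hk, hvk⟩ := mem_biUnion.1 (support_sum hv)
  rw [C_mul'] at hvk
  obtain ⟨T, hT, rfl⟩ := mem_image.1 (support_esymmOn_subset S k (support_smul hvk))
  rw [mem_powersetCard] at hT
  exact ⟨T, hT.1, hT.2 ▸ Nat.lt_succ_iff.1 (mem_range.1 hk), rfl⟩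

theorem totalDegree_sum_C_mul_esymmOn {S U : Finset σ} {c : ℕ → R} {N : ℕ} (hU : U ⊆ S)
    (hUN : #U = N) (hc : c N ≠ 0) :
    (∑ k ∈ range (N + 1), C (c k) * esymmOn R S k).totalDegree = N := by
  refine le_antisymm (Finset.sup_le fun v hv => ?_) ?_
  · obtain ⟨T, -, hT, rfl⟩ := exists_eq_of_mem_support_sum_C_mul_esymmOn hv
    exact (Finsupp.degree_sum_single_one T).trans_le hT
  · subst hUN
    have hmem : ∑ j ∈ U, Finsupp.single j 1 ∈
        (∑ k ∈ range (#U + 1), C (c k) * esymmOn R S k).support := by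
      rwa [mem_support_iff, coeff_sum_C_mul_esymmOn c hU le_rfl]
    exact (Finsupp.degree_sum_single_one U).symm.trans_le (le_totalDegree hmem)

theorem isLeadingMonomial_sum_C_mul_esymmOn (m : MonomialOrder σ) {S H : Finset σ}
    {c : ℕ → R} {N : ℕ} (hH : H ⊆ S) (hHN : #H = N) (hc : c N ≠ 0)
    (hm : ∀ a ∈ S \ H, ∀ b ∈ H,
      m.toSyn (Finsupp.single a 1) ≤ m.toSyn (Finsupp.single b 1)) :
    IsLeadingMonomial m (∑ k ∈ range (N + 1), C (c k) * esymmOn R S k)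
      (∑ j ∈ H, Finsupp.single j 1) := by
  refine ⟨?_, fun v hv => ?_⟩
  · rwa [mem_support_iff, coeff_sum_C_mul_esymmOn c hH hHN.le, hHN]
  obtain ⟨T, hTS, hTN, rfl⟩ := exists_eq_of_mem_support_sum_C_mul_esymmOn hv
  exact m.toSyn_sum_single_one_le (hHN ▸ hTN) fun a ha b hb =>
    hm a (sdiff_subset_sdiff hTS le_rfl ha) b (sdiff_subset hb)

theorem eval_indicator_sum_C_mul_esymmOn_eq_zero (S D : Finset σ) {t : ℕ}
    (hD : #(D \ S) < t) :
    eval (fun i => if i ∈ D then (1 : ℤ) else 0)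
      (∑ k ∈ range (t + 1), C ((-1) ^ (t - k) * Ring.choose ((#D : ℤ) - k) (t - k)) *
        esymmOn ℤ S k) = 0 := by
  simp only [map_sum, map_mul, eval_C, eval_indicator_esymmOn,
    sum_negOnePow_mul_choose_sub_mul_choose]
  have hsplit := card_sdiff_add_card_inter D S
  rw [inter_comm] at hsplit
  rw [show (#(S ∩ D) : ℤ) + (t - 1 - #D) = ((t - 1 - #(D \ S) : ℕ) : ℤ) by omega,
    Ring.choose_natCast, Nat.choose_eq_zero_of_lt (by omega), Nat.cast_zero]

end MvPolynomial

theorem card_sdiff_union_Icc_lt {D H : Finset ℕ} {n t : ℕ} (ht : 0 < t) (hD : D ⊆ Icc 1 n)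
    (hH : H ⊆ Ico 1 (2 * t)) (hcard : #H = t) : #(D \ (H ∪ Icc (2 * t) n)) < t := by
  have hsub : D \ (H ∪ Icc (2 * t) n) ⊆ Ico 1 (2 * t) \ H := by
    intro a ha
    simp only [mem_sdiff, mem_union, mem_Icc, mem_Ico, not_or, not_and, not_le] at ha ⊢
    have haD := mem_Icc.1 (hD ha.1)
    exact ⟨⟨haD.1, by omega⟩, ha.2.1⟩
  calc #(D \ (H ∪ Icc (2 * t) n)) ≤ #(Ico 1 (2 * t) \ H) := card_le_card hsub
    _ < t := by rw [card_sdiff_of_subset hH, Nat.card_Ico, hcard]; omega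

theorem fHd_eq_sum_C_mul_esymmOn (n t d : ℕ) (s : Fin t → ℕ) :
    fHd n t d s = ∑ k ∈ range (t + 1),
      C ((-1 : ℤ) ^ (t - k) * Ring.choose ((d : ℤ) - k) (t - k)) *
        esymmOn ℤ (image s univ ∪ Icc (2 * t) n) k :=
  rfl

/-- Let `0 < t ≤ n/2`, `0 ≤ d ≤ n`, and `H = {s_1 < … < s_t} ⊆ [n]` with `t` the smallest
index `j` such that `s_j < 2j`. Then:
(a) `deg f_{H,d} = t`, the coefficient of `x_H = ∏_{j ∈ H} x_j` in `f_{H,d}` is `1`, and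
`x_H` is the leading monomial of `f_{H,d}` for every term order with `x_n ≺ … ≺ x_1`;
(b) `f_{H,d}` vanishes at the characteristic vector of every `d`-element subset of `[n]`. -/
theorem stmt19 (n t d : ℕ) (ht : 0 < t)
    (s : Fin t → ℕ) (hmono : StrictMono s)
    (hrange : ∀ j, 1 ≤ s j ∧ s j ≤ n)
    (hlast : s ⟨t - 1, by omega⟩ < 2 * t) :
    ((fHd n t d s).totalDegree = t ∧
      (fHd n t d s).coeff (∑ j ∈ Finset.image s Finset.univ, Finsupp.single j 1) = 1 ∧
      (∀ m : MonomialOrder ℕ,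
        (∀ a b : ℕ, 1 ≤ a → a < b → b ≤ n →
          m.toSyn (Finsupp.single b 1) < m.toSyn (Finsupp.single a 1)) →
        IsLeadingMonomial m (fHd n t d s)
          (∑ j ∈ Finset.image s Finset.univ, Finsupp.single j 1))) ∧
      ∀ D : Finset ℕ, D ⊆ Finset.Icc 1 n → D.card = d →
        eval (fun i => if i ∈ D then (1 : ℤ) else 0) (fHd n t d s) = 0 := by
  have hH : image s univ ⊆ Ico 1 (2 * t) := by
    simp only [image_subset_iff, mem_univ, mem_Ico, true_implies]
    exact fun j => ⟨(hrange j).1,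
      (hmono.monotone (Fin.le_def.2 (Nat.le_sub_one_of_lt j.2))).trans_lt hlast⟩
  have hcard : #(image s univ) = t := by
    rw [card_image_of_injective _ hmono.injective, card_univ, Fintype.card_fin]
  have hsub : image s univ ⊆ image s univ ∪ Icc (2 * t) n := subset_union_left
  have hct : (-1 : ℤ) ^ (t - t) * Ring.choose ((d : ℤ) - t) (t - t) = 1 := by simp
  rw [fHd_eq_sum_C_mul_esymmOn]
  refine ⟨⟨totalDegree_sum_C_mul_esymmOn hsub hcard (by simp), ?_, fun m hm => ?_⟩,
    fun D hD hDcard => ?_⟩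
  · rw [coeff_sum_C_mul_esymmOn _ hsub hcard.le, hcard, hct]
  · refine isLeadingMonomial_sum_C_mul_esymmOn m hsub hcard (by simp)
      fun a ha b hb => ?_
    rw [union_sdiff_left] at ha
    have ha := mem_Icc.1 (mem_sdiff.1 ha).1
    have hb := mem_Ico.1 (hH hb)
    exact (hm b a hb.1 (by omega) ha.2).le
  · subst hDcard
    exact eval_indicator_sum_C_mul_esymmOn_eq_zero _ _ (card_sdiff_union_Icc_lt ht hD hH hcard)
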